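/- For every k ∈ {1, 2, …, N−1}, the real number 2·cos(kπ/N)/z is an eigenvalue of the matrix T. -/

import Mathlib

/-!
Conjugating by `diag(e^{-jε})` turns `T` into `1/z` times the symmetric operator
`u ↦ u_{j-1} + u_{j+1}`, whose eigenfunctions are sines. The eigenvector is
`v_j = e^{-jε} (sin((j+1)θ) - e^ε sin(jθ))` with `θ = kπ/N`, extended to all `j ∈ ℤ`: it satisfies
the three-term recurrence for every `θ`, the boundary condition of the first row for every `θ`,
and that of the last row as soon as `sin(Nθ) = 0`. Its coordinate `v_0 = sin θ` is nonzero
because `0 < θ < π`.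
-/

open Real Matrix Finset

/-- The TSAC transition matrix `T` on the diagonal of the computation-qubit density
matrix: `N = 2^n`, `z = e^ε + e^{-ε}`, `T 0 0 = T 0 1 = e^ε/z`,
`T (N-1) (N-2) = T (N-1) (N-1) = e^{-ε}/z`, and for `0 < i < N-1`,
`T i (i-1) = e^{-ε}/z`, `T i (i+1) = e^ε/z`; all other entries vanish. -/
noncomputable def Tmat (n : ℕ) (ε : ℝ) : Matrix (Fin (2 ^ n)) (Fin (2 ^ n)) ℝ :=
  fun i j =>
    if (i : ℕ) = 0 then
      if (j : ℕ) ≤ 1 then Real.exp ε / (Real.exp ε + Real.exp (-ε)) else 0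
    else if (i : ℕ) = 2 ^ n - 1 then
      if 2 ^ n - 2 ≤ (j : ℕ) then Real.exp (-ε) / (Real.exp ε + Real.exp (-ε)) else 0
    else if (j : ℕ) + 1 = (i : ℕ) then Real.exp (-ε) / (Real.exp ε + Real.exp (-ε))
    else if (j : ℕ) = (i : ℕ) + 1 then Real.exp ε / (Real.exp ε + Real.exp (-ε))
    else 0

theorem Matrix.mulVec_apply_eq_add_of_row_support {m ι R : Type*} [Fintype ι]
    [NonUnitalNonAssocSemiring R] (M : Matrix m ι R) (v : ι → R) {i : m} (a b : ι) (hab : a ≠ b)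
    (h : ∀ j, j ≠ a → j ≠ b → M i j = 0) : (M *ᵥ v) i = M i a * v a + M i b * v b :=
  Fintype.sum_eq_add a b hab fun j hj => by simp [h j hj.1 hj.2]

section TmatRows

variable {n : ℕ} {ε : ℝ} (f : ℤ → ℝ) (i : Fin (2 ^ n))

theorem Tmat_mulVec_apply_of_val_eq_zero (hn : 1 ≤ n) (hi₀ : (i : ℕ) = 0)
    (h₀ : exp (-ε) * f (-1) = exp ε * f 0) :
    (Tmat n ε *ᵥ fun j => f (j : ℕ)) i =
      (exp (-ε) * f ((i : ℕ) - 1) + exp ε * f ((i : ℕ) + 1)) / (exp ε + exp (-ε)) := by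
  have hN : 2 ≤ 2 ^ n := le_self_pow₀ one_le_two (by omega)
  rw [mulVec_apply_eq_add_of_row_support _ _ ⟨0, by omega⟩ ⟨1, by omega⟩
    (Fin.ne_of_val_ne zero_ne_one)]
  · simp only [Tmat, hi₀, ↓reduceIte, zero_le, Nat.cast_zero, le_refl, Nat.cast_one, zero_sub,
      zero_add]
    linear_combination (-1 / (exp ε + exp (-ε))) * h₀
  · intro j hj₀ hj₁
    simp only [Ne, Fin.ext_iff] at hj₀ hj₁
    have hj : ¬ (j : ℕ) ≤ 1 := by omega
    simp [Tmat, hi₀, hj]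

theorem Tmat_mulVec_apply_of_val_eq_last (hn : 1 ≤ n) (hi₁ : (i : ℕ) = 2 ^ n - 1)
    (h₁ : exp ε * f (2 ^ n) = exp (-ε) * f (2 ^ n - 1)) :
    (Tmat n ε *ᵥ fun j => f (j : ℕ)) i =
      (exp (-ε) * f ((i : ℕ) - 1) + exp ε * f ((i : ℕ) + 1)) / (exp ε + exp (-ε)) := by
  have hN : 2 ≤ 2 ^ n := le_self_pow₀ one_le_two (by omega)
  have hN₁ : 2 ^ n - 1 ≠ 0 := by omega
  rw [mulVec_apply_eq_add_of_row_support _ _ ⟨2 ^ n - 2, by omega⟩ ⟨2 ^ n - 1, by omega⟩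
    (Fin.ne_of_val_ne (by omega : 2 ^ n - 2 ≠ 2 ^ n - 1))]
  · have hcast₁ : ((2 ^ n - 1 : ℕ) : ℤ) = 2 ^ n - 1 := by
      rw [Nat.cast_sub (by omega)]; push_cast; ring
    have hcast₂ : ((2 ^ n - 2 : ℕ) : ℤ) = 2 ^ n - 2 := by
      rw [Nat.cast_sub (by omega)]; push_cast; ring
    simp only [Tmat, hi₁, hN₁, hcast₁, hcast₂, if_false, le_refl, if_true,
      if_pos (Nat.sub_le_sub_left one_le_two _), sub_add_cancel]
    rw [show (2 : ℤ) ^ n - 1 - 1 = 2 ^ n - 2 by ring]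
    linear_combination (-1 / (exp ε + exp (-ε))) * h₁
  · intro j hj₀ hj₁
    simp only [Ne, Fin.ext_iff] at hj₀ hj₁
    have hj : ¬ 2 ^ n - 2 ≤ (j : ℕ) := by omega
    simp [Tmat, hi₁, hN₁, hj]

theorem Tmat_mulVec_apply_of_interior (hi₀ : (i : ℕ) ≠ 0) (hi₁ : (i : ℕ) ≠ 2 ^ n - 1) :
    (Tmat n ε *ᵥ fun j => f (j : ℕ)) i =
      (exp (-ε) * f ((i : ℕ) - 1) + exp ε * f ((i : ℕ) + 1)) / (exp ε + exp (-ε)) := by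
  have hi := i.isLt
  have hi_pos : 1 ≤ (i : ℕ) := Nat.one_le_iff_ne_zero.mpr hi₀
  rw [mulVec_apply_eq_add_of_row_support _ _ ⟨i - 1, by omega⟩ ⟨i + 1, by omega⟩
    (Fin.ne_of_val_ne (by omega : (i : ℕ) - 1 ≠ i + 1))]
  · have hi₂ : (i : ℕ) + 1 + 1 ≠ i := by omega
    simp only [Tmat, hi₀, hi₁, hi₂, if_false, Nat.sub_add_cancel hi_pos, if_true]
    push_cast [Nat.cast_sub hi_pos]
    ring
  · intro j hj₀ hj₁
    simp only [Ne, Fin.ext_iff] at hj₀ hj₁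
    have hj₀' : (j : ℕ) + 1 ≠ i := by omega
    have hj₁' : (j : ℕ) ≠ i + 1 := by omega
    simp [Tmat, hi₀, hi₁, hj₀', hj₁']

/-- The corner entries of `T` are absorbed into the ghost values `f (-1)` and `f N`, so that every
row acts like an interior row. -/
theorem Tmat_mulVec_apply (hn : 1 ≤ n) (h₀ : exp (-ε) * f (-1) = exp ε * f 0)
    (h₁ : exp ε * f (2 ^ n) = exp (-ε) * f (2 ^ n - 1)) :
    (Tmat n ε *ᵥ fun j => f (j : ℕ)) i =
      (exp (-ε) * f ((i : ℕ) - 1) + exp ε * f ((i : ℕ) + 1)) / (exp ε + exp (-ε)) := by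
  by_cases hi₀ : (i : ℕ) = 0
  · exact Tmat_mulVec_apply_of_val_eq_zero f i hn hi₀ h₀
  by_cases hi₁ : (i : ℕ) = 2 ^ n - 1
  · exact Tmat_mulVec_apply_of_val_eq_last f i hn hi₁ h₁
  exact Tmat_mulVec_apply_of_interior f i hi₀ hi₁

end TmatRows

theorem Real.sin_sub_add_sin_add_mul (x θ : ℝ) :
    sin ((x - 1) * θ) + sin ((x + 1) * θ) = 2 * cos θ * sin (x * θ) := by
  rw [sub_mul, add_mul, one_mul, sin_sub, sin_add]; ring

noncomputable def cosineMode (ε θ : ℝ) (j : ℤ) : ℝ :=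
  exp (-(j * ε)) * (sin ((j + 1) * θ) - exp ε * sin (j * θ))

theorem cosineMode_zero (ε θ : ℝ) : cosineMode ε θ 0 = sin θ := by
  simp [cosineMode]

theorem cosineMode_recurrence (ε θ : ℝ) (j : ℤ) :
    exp (-ε) * cosineMode ε θ (j - 1) + exp ε * cosineMode ε θ (j + 1) =
      2 * cos θ * cosineMode ε θ j := by
  have hsin₀ := sin_sub_add_sin_add_mul j θ
  have hsin₁ := sin_sub_add_sin_add_mul (j + 1) θ
  have hexp₀ : exp (-ε) * exp (-((j - 1) * ε)) = exp (-(j * ε)) := by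
    rw [← exp_add]; ring_nf
  have hexp₁ : exp ε * exp (-((j + 1) * ε)) = exp (-(j * ε)) := by
    rw [← exp_add]; ring_nf
  simp only [cosineMode]
  push_cast
  rw [← mul_assoc, ← mul_assoc, hexp₀, hexp₁, sub_add_cancel]
  rw [add_sub_cancel_right] at hsin₁
  linear_combination exp (-(j * ε)) * (hsin₁ - exp ε * hsin₀)

theorem cosineMode_left_boundary (ε θ : ℝ) :
    exp (-ε) * cosineMode ε θ (-1) = exp ε * cosineMode ε θ 0 := by
  simp only [cosineMode]
  push_cast
  rw [← mul_assoc, ← exp_add]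
  simp [sin_neg]

theorem cosineMode_right_boundary (ε θ : ℝ) (M : ℤ) (hM : sin (M * θ) = 0) :
    exp ε * cosineMode ε θ M = exp (-ε) * cosineMode ε θ (M - 1) := by
  have hsin := sin_sub_add_sin_add_mul M θ
  have hexp : exp (-ε) * exp (-((M - 1) * ε)) * exp ε = exp ε * exp (-(M * ε)) := by
    rw [← exp_add, ← exp_add, ← exp_add]; ring_nf
  simp only [cosineMode]
  push_cast
  rw [sub_add_cancel, hM]
  rw [hM, mul_zero] at hsin
  linear_combination (exp ε * exp (-(M * ε))) * hsin + sin ((M - 1) * θ) * hexp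

theorem tsac_cosine_eigenvalues_general (n : ℕ) (hn : 1 ≤ n) (ε : ℝ) :
    ∀ k : ℕ, 1 ≤ k → k ≤ 2 ^ n - 1 →
      ∃ v : Fin (2 ^ n) → ℝ, v ≠ 0 ∧
        (Tmat n ε).mulVec v =
          (2 * Real.cos (k * Real.pi / 2 ^ n) / (Real.exp ε + Real.exp (-ε))) • v := by
  intro k hk₁ hk₂
  set θ := k * π / 2 ^ n
  have hθ_pos : 0 < θ := by positivity
  have hθ_lt : θ < π := by
    rw [div_lt_iff₀ (by positivity), mul_comm]
    gcongr
    exact_mod_cast (by omega : k < 2 ^ n)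
  have hsin : sin (((2 ^ n : ℤ) : ℝ) * θ) = 0 := by
    rw [Int.cast_pow, Int.cast_ofNat, mul_div_cancel₀ _ (by positivity), sin_nat_mul_pi]
  refine ⟨fun j => cosineMode ε θ (j : ℕ), fun hv => ?_, ?_⟩
  · have h₀ := congrFun hv ⟨0, by positivity⟩
    simp only [Nat.cast_zero, cosineMode_zero, Pi.zero_apply] at h₀
    exact (sin_pos_of_pos_of_lt_pi hθ_pos hθ_lt).ne' h₀
  · ext i
    rw [Tmat_mulVec_apply _ i hn (cosineMode_left_boundary ε θ)
      (cosineMode_right_boundary ε θ _ hsin), cosineMode_recurrence, Pi.smul_apply, smul_eq_mul]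
    ring

/-- For every `k ∈ {1, …, N-1}` (with `N = 2^n`), the real number
`2 cos(kπ/N)/z` is an eigenvalue of the TSAC transition matrix `T`,
i.e. it admits a nonzero eigenvector. -/
theorem tsac_cosine_eigenvalues (n : ℕ) (hn : 1 ≤ n) (ε : ℝ) (hε : 0 < ε) :
    ∀ k : ℕ, 1 ≤ k → k ≤ 2 ^ n - 1 →
      ∃ v : Fin (2 ^ n) → ℝ, v ≠ 0 ∧
        (Tmat n ε).mulVec v =
          (2 * Real.cos (k * Real.pi / 2 ^ n) / (Real.exp ε + Real.exp (-ε))) • v :=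
  tsac_cosine_eigenvalues_general n hn ε
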